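/- Fix $k \ge 1$. With $v_\infty = \sum_{n\ge 1} f_n v_n$ where $v_n = [1, q^n z_2, z_2]$ and $f_n = \frac{(-1)^{n-1} q^{n(n-1)/2}(1-q^{2n}z_1z_2^2)}{(q)_\infty (q^{n+1}z_1z_2^2)_\infty (q)_{n-1}(1 - q^n z_2)}$, one has $B v_\infty = f_1 v_1$, where $B$ is the extremal operator $B(f[P,Q,R]) = S\big(\frac{f(1-Q/P)[P,R,q^{-1}z_2P]}{(1-z_1z_2Q/P)(1-Q/R)(1-R/P)}\big)$ extended by linearity, and $S$ is the substitution $z_2 \mapsto qz_2$. -/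

import Mathlib

/-!
After the shift `z₂ ↦ q z₂`, the `n`-th term of `B v_∞` is `f₁ v₁` times
`(-1)^{n-1} q^{n(n-1)/2} (1 - q^{2n} x) (qx;q)_{n-1} / (q;q)_n` with `x = q² z₁ z₂²`: the `n`-th
term of Jackson's sum at `y = 1`, multiplied by `(qx;q)_∞`. This term is `S_{n-1} - S_n` for
`S_N = (-1)^N q^{N(N+1)/2} (qx;q)_N / (q;q)_N`, so the partial sums are `f₁ v₁ (1 - S_N)`, and
`S_N → 0` `q`-adically because `q^{N(N+1)/2}` divides it.
-/

namespace Boson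

/-- Formal power series in `q = X 0`, `z₁ = X 1`, `z₂ = X 2` over `ℚ`. -/
abbrev R := MvPowerSeries (Fin 3) ℚ

noncomputable def qv : R := MvPowerSeries.X 0
noncomputable def z1v : R := MvPowerSeries.X 1
noncomputable def z2v : R := MvPowerSeries.X 2

/-- The infinite Pochhammer symbol `(a;q)_∞ = ∏_{j≥0}(1 - a qʲ)`, defined
coefficientwise: when `a` has vanishing constant term the coefficient of any
monomial `d` in the partial products stabilizes as soon as the number of factors
exceeds the total degree of `d`. -/
noncomputable def pochInf (a : R) : R := fun d =>
  MvPowerSeries.coeff d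
    (∏ j ∈ Finset.range (d 0 + d 1 + d 2 + 1), (1 - a * qv ^ j))

/-- The finite Pochhammer symbol `(q;q)_n = ∏_{j=0}^{n-1}(1 - q^{j+1})`. -/
noncomputable def pochFin (n : ℕ) : R := ∏ j ∈ Finset.range n, (1 - qv ^ (j + 1))

/-- The formal sum `∑_{n≥1} t n`, defined coefficientwise: applicable when the
`n`-th term is divisible by `q^{n(n-1)/2}`, so that the coefficient of any
monomial `d` in the partial sums stabilizes. -/
noncomputable def sumInf (t : ℕ → R) : R := fun d =>
  MvPowerSeries.coeff d (∑ n ∈ Finset.range (d 0 + d 1 + d 2 + 2), t (n + 1))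

/-- The scalar part
`f_n = (-1)^{n-1} q^{n(n-1)/2} (1-q^{2n}z₁z₂²) / ((q)_∞ (q^{n+1}z₁z₂²)_∞ (q)_{n-1} (1-qⁿz₂))`
(inverses are taken in `ℚ[[q,z₁,z₂]]`; every inverted factor has constant term `1`). -/
noncomputable def fn (n : ℕ) : R :=
  (-1 : R) ^ (n - 1) * qv ^ (n * (n - 1) / 2) * (1 - qv ^ (2 * n) * z1v * z2v ^ 2) *
    (pochInf qv * pochInf (qv ^ (n + 1) * z1v * z2v ^ 2) * pochFin (n - 1) *
      (1 - qv ^ n * z2v))⁻¹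

/-- The shift `S f_n` of the scalar part `f_n` under `z₂ ↦ q z₂`, written out
explicitly (each occurrence of `z₂` in `f_n` is replaced by `q z₂`). -/
noncomputable def fnS (n : ℕ) : R :=
  (-1 : R) ^ (n - 1) * qv ^ (n * (n - 1) / 2) * (1 - qv ^ (2 * n + 2) * z1v * z2v ^ 2) *
    (pochInf qv * pochInf (qv ^ (n + 3) * z1v * z2v ^ 2) * pochFin (n - 1) *
      (1 - qv ^ (n + 1) * z2v))⁻¹

/-- The `(i,l)`-component of `B(fₙ vₙ)` (for `vₙ = [1, qⁿz₂, z₂]`), written after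
the shift `S : z₂ ↦ qz₂`:
`S( fₙ (1-qⁿz₂) [1, z₂, q⁻¹z₂] / ((1-qⁿz₁z₂²)(1-qⁿ)(1-z₂)) )`,
with every denominator expanded in non-negative powers. -/
noncomputable def Bterm (n i l : ℕ) : R :=
  fnS n * (1 - qv ^ (n + 1) * z2v) *
    ((1 - qv ^ (n + 2) * z1v * z2v ^ 2) * (1 - qv ^ n) * (1 - qv * z2v))⁻¹ *
    (qv * z2v) ^ (l - i) * z2v ^ i

end Boson

open MvPowerSeries Finset

section qPochhammer

variable {A : Type*} [CommRing A]

def qPochhammer (a q : A) (n : ℕ) : A := ∏ j ∈ range n, (1 - a * q ^ j)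

variable (a q : A)

@[simp]
theorem qPochhammer_zero : qPochhammer a q 0 = 1 := prod_range_zero _

theorem qPochhammer_succ (n : ℕ) :
    qPochhammer a q (n + 1) = qPochhammer a q n * (1 - a * q ^ n) :=
  prod_range_succ _ _

theorem qPochhammer_add (m n : ℕ) :
    qPochhammer a q (m + n) = qPochhammer a q m * qPochhammer (a * q ^ m) q n := by
  simp only [qPochhammer, prod_range_add, pow_add, mul_assoc]

theorem dvd_qPochhammer_sub_one {c : A} (hc : c ∣ a) (n : ℕ) : c ∣ qPochhammer a q n - 1 := by
  induction n with
  | zero => simp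
  | succ n ih =>
    rw [qPochhammer_succ, show qPochhammer a q n * (1 - a * q ^ n) - 1 =
      (qPochhammer a q n - 1) * (1 - a * q ^ n) - a * q ^ n by ring]
    exact dvd_sub (ih.mul_right _) (hc.mul_right _)

/-- The first `K` factors of `(a;q)_∞` already determine it modulo `q^K`. -/
theorem pow_dvd_qPochhammer_add_sub (K r : ℕ) :
    q ^ K ∣ qPochhammer a q (K + r) - qPochhammer a q K := by
  rw [qPochhammer_add, ← mul_sub_one]
  exact (dvd_qPochhammer_sub_one _ q (dvd_mul_left _ _) r).mul_left _

/-- `S_m - S_{m+1} = (-1)^m q^{m(m+1)/2} (1 - q^{2m+2}x) (qx;q)_m / (q;q)_{m+1}` for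
`S_m = (-1)^m q^{m(m+1)/2} (qx;q)_m / (q;q)_m`, with the denominator `(q;q)_{m+1}` cleared. -/
theorem qPochhammer_jackson_telescope (x : A) (m : ℕ) :
    (-1) ^ m * q ^ (m * (m + 1) / 2) * qPochhammer (q * x) q m * (1 - q ^ (m + 1)) -
        (-1) ^ (m + 1) * q ^ ((m + 1) * (m + 2) / 2) * qPochhammer (q * x) q (m + 1) =
      (-1) ^ m * q ^ (m * (m + 1) / 2) * (1 - q ^ (2 * m + 2) * x) *
        qPochhammer (q * x) q m := by
  have htri : (m + 1) * (m + 2) / 2 = m * (m + 1) / 2 + (m + 1) := by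
    rw [show (m + 1) * (m + 2) = m * (m + 1) + (m + 1) * 2 by ring,
      Nat.add_mul_div_right _ _ two_pos]
  rw [htri, qPochhammer_succ]
  ring

end qPochhammer

namespace MvPowerSeries

variable {σ : Type*}

theorem eq_zero_of_forall_X_pow_dvd {R : Type*} [CommSemiring R] {s : σ}
    {f : MvPowerSeries σ R} (h : ∀ n, X s ^ n ∣ f) : f = 0 := by
  ext d
  exact X_pow_dvd_iff.mp (h (d s + 1)) d (Nat.lt_succ_self _)

theorem mul_inv_eq_mul_inv_of_mul_eq {k : Type*} [Field k] {a b U V : MvPowerSeries σ k}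
    (hU : constantCoeff U ≠ 0) (hV : constantCoeff V ≠ 0) (h : a * V = b * U) :
    a * U⁻¹ = b * V⁻¹ := by
  rw [MvPowerSeries.eq_mul_inv_iff_mul_eq hV, mul_right_comm, h, mul_assoc,
    MvPowerSeries.mul_inv_cancel _ hU, mul_one]

end MvPowerSeries

namespace Boson

theorem qv_pow_dvd_iff {f : R} {M : ℕ} : qv ^ M ∣ f ↔ ∀ d, d 0 < M → coeff d f = 0 :=
  X_pow_dvd_iff

@[simp] theorem constantCoeff_qv : constantCoeff qv = 0 := constantCoeff_X _
@[simp] theorem constantCoeff_z1v : constantCoeff z1v = 0 := constantCoeff_X _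
@[simp] theorem constantCoeff_z2v : constantCoeff z2v = 0 := constantCoeff_X _

@[simp]
theorem constantCoeff_pochFin (n : ℕ) : constantCoeff (pochFin n) = 1 := by
  simp [pochFin, map_prod]

theorem pochFin_succ (n : ℕ) : pochFin (n + 1) = pochFin n * (1 - qv ^ (n + 1)) :=
  prod_range_succ _ _

theorem coeff_qPochhammer_eq (a : R) {d : Fin 3 →₀ ℕ} {K M : ℕ} (hK : d 0 < K) (hM : d 0 < M) :
    coeff d (qPochhammer a qv K) = coeff d (qPochhammer a qv M) := by
  wlog hKM : K ≤ M generalizing K M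
  · exact (this hM hK (le_of_not_ge hKM)).symm
  obtain ⟨r, rfl⟩ := Nat.exists_eq_add_of_le hKM
  rw [eq_comm, ← sub_eq_zero, ← map_sub]
  exact qv_pow_dvd_iff.mp (pow_dvd_qPochhammer_add_sub a qv K r) d hK

theorem qv_pow_dvd_pochInf_sub (a : R) (M : ℕ) : qv ^ M ∣ pochInf a - qPochhammer a qv M := by
  refine qv_pow_dvd_iff.mpr fun d hd => ?_
  rw [map_sub, sub_eq_zero]
  exact coeff_qPochhammer_eq a (by omega) hd

theorem pochInf_eq_qPochhammer_mul (a : R) (n : ℕ) :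
    pochInf a = qPochhammer a qv n * pochInf (a * qv ^ n) := by
  rw [← sub_eq_zero]
  refine eq_zero_of_forall_X_pow_dvd (s := 0) fun M => show qv ^ M ∣ _ from ?_
  obtain ⟨g, hg⟩ := qv_pow_dvd_pochInf_sub a (n + M)
  obtain ⟨h, hh⟩ := qv_pow_dvd_pochInf_sub (a * qv ^ n) M
  rw [sub_eq_iff_eq_add'] at hg hh
  rw [hg, hh, qPochhammer_add]
  exact ⟨qv ^ n * g - qPochhammer a qv n * h, by ring⟩

@[simp]
theorem constantCoeff_pochInf {a : R} (ha : constantCoeff a = 0) :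
    constantCoeff (pochInf a) = 1 := by
  rw [← coeff_zero_eq_constantCoeff_apply]
  show coeff 0 (qPochhammer a qv 1) = 1
  simp [qPochhammer, ha]

noncomputable def xv : R := qv ^ 2 * z1v * z2v ^ 2

noncomputable def jacksonTail (N : ℕ) : R :=
  (-1) ^ N * qv ^ (N * (N + 1) / 2) * qPochhammer (qv * xv) qv N * (pochFin N)⁻¹

theorem jacksonTail_zero : jacksonTail 0 = 1 := by
  simp [jacksonTail, pochFin]

theorem qv_pow_dvd_jacksonTail (N : ℕ) : qv ^ N ∣ jacksonTail N := by
  have hN : N ≤ N * (N + 1) / 2 := by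
    rcases N with _ | N
    · rfl
    · exact (Nat.le_div_iff_mul_le two_pos).mpr (Nat.mul_le_mul_left _ (by omega))
  exact (((pow_dvd_pow qv hN).mul_left _).mul_right _).mul_right _

theorem jacksonTail_sub_succ (m : ℕ) :
    jacksonTail m - jacksonTail (m + 1) =
      (-1) ^ m * qv ^ (m * (m + 1) / 2) * (1 - qv ^ (2 * m + 2) * xv) *
        qPochhammer (qv * xv) qv m * (pochFin (m + 1))⁻¹ := by
  have hinv : (pochFin m)⁻¹ = (1 - qv ^ (m + 1)) * (pochFin (m + 1))⁻¹ := by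
    rw [pochFin_succ, MvPowerSeries.mul_inv_rev, ← mul_assoc,
      MvPowerSeries.mul_inv_cancel _ (by simp), one_mul]
  rw [jacksonTail, jacksonTail, hinv,
    ← qPochhammer_jackson_telescope qv xv m]
  ring

theorem fn_one : fn 1 = (pochInf qv * pochInf (qv * xv) * (1 - qv * z2v))⁻¹ := by
  have hsplit : pochInf xv = (1 - xv) * pochInf (qv * xv) := by
    rw [pochInf_eq_qPochhammer_mul xv 1, mul_comm xv]
    simp [qPochhammer]
  calc fn 1 = (1 - xv) * (pochInf qv * pochInf xv * (1 - qv * z2v))⁻¹ := by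
        simp [fn, xv, pochFin]
    _ = 1 * (pochInf qv * pochInf (qv * xv) * (1 - qv * z2v))⁻¹ := by
        refine mul_inv_eq_mul_inv_of_mul_eq (by simp [xv]) (by simp [xv]) ?_
        rw [hsplit]
        ring
    _ = _ := one_mul _

theorem Bterm_succ (m i l : ℕ) :
    Bterm (m + 1) i l =
      fn 1 * ((qv * z2v) ^ (l - i) * z2v ^ i) * (jacksonTail m - jacksonTail (m + 1)) := by
  have hsplit : pochInf (qv * xv) = qPochhammer (qv * xv) qv m *
      (1 - qv ^ (m + 1 + 2) * z1v * z2v ^ 2) * pochInf (qv ^ (m + 1 + 3) * z1v * z2v ^ 2) := by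
    rw [pochInf_eq_qPochhammer_mul _ (m + 1), qPochhammer_succ,
      show qv * xv * qv ^ m = qv ^ (m + 1 + 2) * z1v * z2v ^ 2 by rw [xv]; ring,
      show qv * xv * qv ^ (m + 1) = qv ^ (m + 1 + 3) * z1v * z2v ^ 2 by rw [xv]; ring]
  rw [jacksonTail_sub_succ, fn_one]
  calc Bterm (m + 1) i l
      = ((-1) ^ m * qv ^ (m * (m + 1) / 2) * (1 - qv ^ (2 * (m + 1) + 2) * z1v * z2v ^ 2) *
          (1 - qv ^ (m + 1 + 1) * z2v) * ((qv * z2v) ^ (l - i) * z2v ^ i)) *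
        (pochInf qv * pochInf (qv ^ (m + 1 + 3) * z1v * z2v ^ 2) * pochFin m *
          (1 - qv ^ (m + 1 + 1) * z2v) *
          ((1 - qv ^ (m + 1 + 2) * z1v * z2v ^ 2) * (1 - qv ^ (m + 1)) * (1 - qv * z2v)))⁻¹ := by
        simp only [Bterm, fnS, Nat.add_sub_cancel, Nat.mul_comm (m + 1) m,
          MvPowerSeries.mul_inv_rev]
        ring
    _ = ((-1) ^ m * qv ^ (m * (m + 1) / 2) * (1 - qv ^ (2 * m + 2) * xv) *
          qPochhammer (qv * xv) qv m * ((qv * z2v) ^ (l - i) * z2v ^ i)) *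
        (pochInf qv * pochInf (qv * xv) * (1 - qv * z2v) * pochFin (m + 1))⁻¹ := by
        refine mul_inv_eq_mul_inv_of_mul_eq (by simp) (by simp [xv]) ?_
        rw [hsplit, pochFin_succ, xv]
        ring
    _ = _ := by
        simp only [MvPowerSeries.mul_inv_rev]
        ring

theorem sumInf_eq_of_forall_qv_pow_dvd {t : ℕ → R} {f : R}
    (h : ∀ N, qv ^ N ∣ f - ∑ n ∈ range N, t (n + 1)) : sumInf t = f := by
  ext d
  have hd := qv_pow_dvd_iff.mp (h (d 0 + d 1 + d 2 + 2)) d (by omega)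
  rw [map_sub, sub_eq_zero] at hd
  exact hd.symm

theorem B_vinfty_general (i l : ℕ) :
    sumInf (fun n => Bterm n i l) = fn 1 * (qv * z2v) ^ (l - i) * z2v ^ i := by
  refine sumInf_eq_of_forall_qv_pow_dvd fun N => ?_
  have hpartial : fn 1 * (qv * z2v) ^ (l - i) * z2v ^ i - ∑ n ∈ range N, Bterm (n + 1) i l =
      fn 1 * ((qv * z2v) ^ (l - i) * z2v ^ i) * jacksonTail N := by
    simp only [Bterm_succ, ← mul_sum, sum_range_sub', jacksonTail_zero]
    ring
  rw [hpartial]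
  exact (qv_pow_dvd_jacksonTail N).mul_left _

/-- `B v_∞ = f₁ v₁`, where `v_∞ = ∑_{n≥1} fₙ vₙ` with `vₙ = [1, qⁿz₂, z₂]`:
componentwise, `∑_{n≥1} (B fₙ vₙ)_{i,l} = f₁ · (qz₂)^{l-i} z₂^i`. -/
theorem B_vinfty (k : ℕ) (hk : 1 ≤ k) (i l : ℕ) (hil : i ≤ l) (hlk : l ≤ k) :
    sumInf (fun n => Bterm n i l) = fn 1 * (qv * z2v) ^ (l - i) * z2v ^ i :=
  B_vinfty_general i l

end Boson
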